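/- arXiv:cond-mat/0506613 — 6 statements merged into one kernel-verified Lean document; each statement's English description precedes it below -/
import Mathlib

section
/- Let N ≥ 8 be an even integer, Δ ∈ ℂ, and r ∈ ℂ with r ≠ 0 and such that none of r−2Δ, 1−2Δr, r−Δ, 1−Δr vanishes. Then the pair (e₃,e₄) = (r, 1/r) satisfies both bound-pair Bethe equations for n=4 if and only if r is a root of the reciprocal polynomial equation r^N − 3Δ r^{N−1} + 2Δ²(r^{N−2} + r²) − 3Δ r + 1 = 0. -/
/-!
At `(e₃, e₄) = (r, r⁻¹)` the factors `1 - 2Δe₃ + e₃e₄` and `1 - 2Δe₄ + e₃e₄` become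
`2(1 - Δr)` and `2(r - Δ)/r`, so clearing denominators turns the first Bethe equation into
`r^(N-2)(r - 2Δ)(r - Δ) + (1 - 2Δr)(1 - Δr) = 0`, which expands to `p(r) = 0` for the stated
polynomial `p`. The second equation is the first one at `r⁻¹`, and `p` is self-reciprocal,
`r^N p(r⁻¹) = p(r)`, so both equations say the same thing.
-/

/-- The bound-pair Bethe equation for the unknown `x`, paired with `y`, in the `n = 4`
block of the zero-field six-vertex model with `N` columns:
`x ^ (N-1) = -((1-2Δx)/(x-2Δ)) · ((1-2Δx+xy)/(1-2Δy+xy))`. -/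
def betheEq4 (N : ℕ) (Δ x y : ℂ) : Prop :=
  x ^ (N - 1) =
    -((1 - 2*Δ*x) / (x - 2*Δ)) * ((1 - 2*Δ*x + x*y) / (1 - 2*Δ*y + x*y))

section
variable {K : Type*} [Field K]

def boundPairPoly (N : ℕ) (Δ x : K) : K :=
  x^N - 3*Δ*x^(N-1) + 2*Δ^2*(x^(N-2) + x^2) - 3*Δ*x + 1

lemma boundPairPoly_eq {N : ℕ} (hN : 2 ≤ N) (Δ x : K) :
    boundPairPoly N Δ x = x^(N-2) * ((x - 2*Δ) * (x - Δ)) + (1 - 2*Δ*x) * (1 - Δ*x) := by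
  obtain ⟨m, rfl⟩ := Nat.exists_eq_add_of_le' hN
  simp only [boundPairPoly, Nat.add_sub_cancel, Nat.add_sub_assoc one_le_two]
  ring

lemma pow_mul_boundPairPoly_inv {N : ℕ} (hN : 2 ≤ N) (Δ : K) {x : K} (hx : x ≠ 0) :
    x^N * boundPairPoly N Δ x⁻¹ = boundPairPoly N Δ x := by
  obtain ⟨m, rfl⟩ := Nat.exists_eq_add_of_le' hN
  rw [boundPairPoly_eq hN, boundPairPoly_eq hN, Nat.add_sub_cancel, inv_pow]
  field_simp
  ring

lemma inv_sub_ne_zero {a c : K} (ha : a ≠ 0) (h : 1 - c*a ≠ 0) : a⁻¹ - c ≠ 0 := by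
  rw [show a⁻¹ - c = (1 - c*a) * a⁻¹ by field_simp]
  exact mul_ne_zero h (inv_ne_zero ha)

end

lemma betheEq4_inv_iff {N : ℕ} (hN : 2 ≤ N) {Δ x : ℂ} (hx : x ≠ 0)
    (h2Δ : x - 2*Δ ≠ 0) (hΔ : x - Δ ≠ 0) :
    betheEq4 N Δ x x⁻¹ ↔ boundPairPoly N Δ x = 0 := by
  obtain ⟨m, rfl⟩ := Nat.exists_eq_add_of_le' hN
  have hrhs : -((1 - 2*Δ*x) / (x - 2*Δ)) * ((1 - 2*Δ*x + x*x⁻¹) / (1 - 2*Δ*x⁻¹ + x*x⁻¹))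
      = -(x * ((1 - 2*Δ*x) * (1 - Δ*x))) / ((x - 2*Δ) * (x - Δ)) := by
    rw [mul_inv_cancel₀ hx, show 1 - 2*Δ*x⁻¹ + 1 = 2*(x - Δ)*x⁻¹ by field_simp; ring]
    field_simp
    ring
  rw [betheEq4, hrhs, eq_div_iff (mul_ne_zero h2Δ hΔ), boundPairPoly_eq hN,
    show m + 2 - 1 = m + 1 from rfl, Nat.add_sub_cancel, pow_succ, ← mul_eq_zero_iff_left hx]
  constructor <;> intro h <;> linear_combination h

theorem n4_boundPair_iff_reciprocal_general (N : ℕ) (hN : 8 ≤ N)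
    (Δ r : ℂ) (hr : r ≠ 0)
    (h1 : r - 2*Δ ≠ 0) (h2 : 1 - 2*Δ*r ≠ 0) (h3 : r - Δ ≠ 0) (h4 : 1 - Δ*r ≠ 0) :
    (betheEq4 N Δ r (1/r) ∧ betheEq4 N Δ (1/r) r) ↔
      r^N - 3*Δ*r^(N-1) + 2*Δ^2*(r^(N-2) + r^2) - 3*Δ*r + 1 = 0 := by
  have hN2 : 2 ≤ N := by omega
  have hrecip : boundPairPoly N Δ r⁻¹ = 0 ↔ boundPairPoly N Δ r = 0 := by
    rw [← pow_mul_boundPairPoly_inv hN2 Δ hr, mul_eq_zero_iff_left (pow_ne_zero N hr)]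
  have hfirst := betheEq4_inv_iff hN2 hr h1 h3
  have hsecond := betheEq4_inv_iff hN2 (inv_ne_zero hr) (inv_sub_ne_zero hr h2)
    (inv_sub_ne_zero hr h4)
  rw [inv_inv, hrecip] at hsecond
  rw [one_div, hfirst, hsecond, and_self]
  rfl

/-- For even `N ≥ 8`, the pair `(e₃, e₄) = (r, 1/r)` satisfies both bound-pair Bethe
equations for `n = 4` if and only if `r` is a root of the reciprocal polynomial
`r^N − 3Δ r^(N−1) + 2Δ²(r^(N−2) + r²) − 3Δ r + 1`. -/
theorem n4_boundPair_iff_reciprocal (N : ℕ) (hN : 8 ≤ N) (hNeven : Even N)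
    (Δ r : ℂ) (hr : r ≠ 0)
    (h1 : r - 2*Δ ≠ 0) (h2 : 1 - 2*Δ*r ≠ 0) (h3 : r - Δ ≠ 0) (h4 : 1 - Δ*r ≠ 0) :
    (betheEq4 N Δ r (1/r) ∧ betheEq4 N Δ (1/r) r) ↔
      r^N - 3*Δ*r^(N-1) + 2*Δ^2*(r^(N-2) + r^2) - 3*Δ*r + 1 = 0 :=
  n4_boundPair_iff_reciprocal_general N hN Δ r hr h1 h2 h3 h4
end

section
/- Let Δ ∈ ℂ and let e₃, e₄ ∈ ℂ be nonzero and such that all denominators in the n=4 bound-pair Bethe equations are nonzero both at (e₃,e₄) and at (1/e₃, 1/e₄). If (e₃,e₄) satisfies both n=4 bound-pair Bethe equations, then (1/e₃, 1/e₄) also satisfies both equations. -/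
/-! Substituting `(1/x, 1/y)` for `(x, y)` turns each of the two factors on the right-hand side
of the Bethe equation into its reciprocal (clear the denominators `x` and `x*y`), and the
left-hand side `x ^ (N - 1)` into its reciprocal as well, so the equation is preserved.
Because `a / 0 = 0`, the identity `(a / b)⁻¹ = b / a` holds even where a factor degenerates. -/

section
variable {K : Type*} [Field K]

lemma one_sub_mul_one_div_div_one_div_sub (c x : K) (hx : x ≠ 0) :
    (1 - c * (1/x)) / (1/x - c) = ((1 - c * x) / (x - c))⁻¹ := by
  rw [inv_div]
  field_simp

lemma bethe_scattering_one_div (c x y : K) (hx : x ≠ 0) (hy : y ≠ 0) :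
    (1 - c * (1/x) + (1/x) * (1/y)) / (1 - c * (1/y) + (1/x) * (1/y)) =
      ((1 - c * x + x * y) / (1 - c * y + x * y))⁻¹ := by
  rw [inv_div]
  field_simp
  ring_nf

end

lemma betheEq4_one_div {N : ℕ} {Δ x y : ℂ} (hx : x ≠ 0) (hy : y ≠ 0)
    (h : betheEq4 N Δ x y) : betheEq4 N Δ (1/x) (1/y) := by
  unfold betheEq4 at h ⊢
  rw [one_sub_mul_one_div_div_one_div_sub _ _ hx, bethe_scattering_one_div _ _ _ hx hy,
    one_div, inv_pow, h, neg_mul, neg_mul, inv_neg, mul_inv]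

theorem n4_bethe_inversion_general (N : ℕ) (Δ e₃ e₄ : ℂ)
    (h₃ : e₃ ≠ 0) (h₄ : e₄ ≠ 0)
    (heq₃ : betheEq4 N Δ e₃ e₄) (heq₄ : betheEq4 N Δ e₄ e₃) :
    betheEq4 N Δ (1/e₃) (1/e₄) ∧ betheEq4 N Δ (1/e₄) (1/e₃) :=
  ⟨betheEq4_one_div h₃ h₄ heq₃, betheEq4_one_div h₄ h₃ heq₄⟩

/-- If `(e₃, e₄)` solves the two `n = 4` bound-pair Bethe equations (all denominators
nonzero at `(e₃,e₄)` and at `(1/e₃, 1/e₄)`), then so does `(1/e₃, 1/e₄)`. -/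
theorem n4_bethe_inversion (N : ℕ) (hN : 0 < N) (hNeven : Even N) (Δ e₃ e₄ : ℂ)
    (h₃ : e₃ ≠ 0) (h₄ : e₄ ≠ 0)
    (d₁ : e₃ - 2*Δ ≠ 0) (d₂ : e₄ - 2*Δ ≠ 0)
    (d₃ : 1 - 2*Δ*e₄ + e₃*e₄ ≠ 0) (d₄ : 1 - 2*Δ*e₃ + e₃*e₄ ≠ 0)
    (d₁' : 1/e₃ - 2*Δ ≠ 0) (d₂' : 1/e₄ - 2*Δ ≠ 0)
    (d₃' : 1 - 2*Δ*(1/e₄) + (1/e₃)*(1/e₄) ≠ 0)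
    (d₄' : 1 - 2*Δ*(1/e₃) + (1/e₃)*(1/e₄) ≠ 0)
    (heq₃ : betheEq4 N Δ e₃ e₄) (heq₄ : betheEq4 N Δ e₄ e₃) :
    betheEq4 N Δ (1/e₃) (1/e₄) ∧ betheEq4 N Δ (1/e₄) (1/e₃) :=
  n4_bethe_inversion_general N Δ e₃ e₄ h₃ h₄ heq₃ heq₄
end

section
/- Let N ≥ 4 be an even integer and a, b, c ∈ ℂ. Let T be the zero-field six-vertex transfer matrix on N sites, and let ψ = Σ_{l=1}^{N} (−1)^l |l, l+1⟩, where position indices are taken modulo N (so the l = N term is (−1)^N |N, 1⟩). Then T·ψ = Λ·ψ with Λ = a²b²(a^{N−4} + b^{N−4}) − c²(a^{N−2} + b^{N−2}). -/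
/-- The vertex weight matrices of the zero-field six-vertex model
(`ω₁ = ω₂ = a`, `ω₃ = ω₄ = b`, `ω₅ = ω₆ = c`), acting on the horizontal edge space.
`true` encodes an up arrow (`σ = +1`) and `false` a down arrow (`σ = −1`).
(The displayed `R₋₊` in the source has a typo `[[c,0],[0,0]]`; the ice-rule
consistent weight matrix is `[[0,0],[c,0]]`, used here.) -/
noncomputable def Rvertex (a b c : ℂ) : Bool → Bool → Matrix (Fin 2) (Fin 2) ℂ
  | true,  true  => !![a, 0; 0, b]
  | true,  false => !![0, c; 0, 0]
  | false, true  => !![0, 0; c, 0]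
  | false, false => !![b, 0; 0, a]

/-- The zero-field six-vertex transfer matrix on `N` sites with periodic boundary
conditions: `T σ σ' = trace (R_{σ₁σ'₁} ⋯ R_{σ_N σ'_N})`. -/
noncomputable def transfer (N : ℕ) (a b c : ℂ) :
    Matrix (Fin N → Bool) (Fin N → Bool) ℂ := fun σ σ' =>
  Matrix.trace (((List.finRange N).map fun i => Rvertex a b c (σ i) (σ' i)).prod)

/-- The standard basis vector `|x₁,…,x_n⟩` of `ℂ^(2^N)` indexed by the arrow
configuration with down arrows (`false`) exactly at the positions in `S`. -/
noncomputable def ket {N : ℕ} (S : Finset (Fin N)) : (Fin N → Bool) → ℂ :=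
  fun σ => if σ = fun x => decide (x ∉ S) then 1 else 0

/-! The vertex matrices `R_{s+}` are lower triangular and `R_{s−}` upper triangular. Rotating the
trace to start at site `l`, the matrix element `T σ |l, l+1⟩` is the trace of the three vertex
matrices on the window `l, l+1, l+2` times a product of `R_{s+}` over the other `N - 3` sites, and
that product is `diag(aᵏ, bᵏ)` when all its arrows are up and has zero diagonal otherwise.
For `σ = |x, x+1⟩` only `l = x - 1, x, x + 1` contribute, which produces the eigenvalue. For any
other `σ` the term at `l` vanishes when `σ l = σ (l+1)`, and when `σ (l+1)` is down the terms at
`l` and `l + 1` are equal; as `N` is even their signs are opposite, so they cancel in pairs. -/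

open Matrix Fin.NatCast

namespace SixVertex

theorem trace_list_prod_rotate {n R : Type*} [Fintype n] [DecidableEq n] [CommSemiring R]
    (L : List (Matrix n n R)) (k : ℕ) : (L.rotate k).prod.trace = L.prod.trace := by
  rw [List.rotate_eq_drop_append_take_mod, List.prod_append, trace_mul_comm, ← List.prod_append,
    List.take_append_drop]

theorem mulVec_sum_mul_single_apply {m n ι R : Type*} [Fintype n] [DecidableEq n] [Fintype ι]
    [CommSemiring R] (M : Matrix m n R) (w : ι → R) (v : ι → n) (i : m) :
    (M *ᵥ fun j => ∑ l, w l * (Pi.single (v l) 1 : n → R) j) i = ∑ l, w l * M i (v l) := by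
  simp only [mulVec, dotProduct, Finset.mul_sum, Pi.single_apply]
  rw [Finset.sum_comm]
  simp [mul_comm]

theorem sum_eq_zero_of_cancel_pairs {G M : Type*} [AddGroup G] [Fintype G] [AddCommMonoid M]
    (g : G) (σ : G → Bool) (f : G → M) (h_eq : ∀ l, σ l = σ (l + g) → f l = 0)
    (h_pair : ∀ l, σ (l + g) = false → f l + f (l + g) = 0) : ∑ l, f l = 0 := by
  have h_split : ∀ l, f l = (if σ (l + g) = false then f l else 0) +
      (if σ l = false then f l else 0) := by
    intro l
    by_cases h : σ l = σ (l + g)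
    · simp [h_eq l h]
    · cases hl : σ l <;> cases hlg : σ (l + g) <;> simp_all
  calc ∑ l, f l
      = ∑ l, ((if σ (l + g) = false then f l else 0) +
          (if σ (l + g) = false then f (l + g) else 0)) := by
        rw [Finset.sum_congr rfl fun l _ => h_split l, Finset.sum_add_distrib,
          Finset.sum_add_distrib,
          Fintype.sum_equiv (Equiv.addRight g) (fun l => if σ (l + g) = false then f (l + g) else 0)
            (fun l => if σ l = false then f l else 0) fun _ => rfl]
    _ = 0 := Finset.sum_eq_zero fun l _ => by
        split_ifs with h
        · exact h_pair l h
        · exact add_zero 0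

theorem neg_one_pow_val_add_one_add_one {R : Type*} [Monoid R] [HasDistribNeg R] {N : ℕ}
    [NeZero N] (hN : Even N) (l : Fin N) :
    (-1 : R) ^ (((l + 1 : Fin N) : ℕ) + 1) = -(-1) ^ ((l : ℕ) + 1) := by
  have h_mod : ∀ n, (-1 : R) ^ (n % N) = (-1) ^ n := fun n => by
    conv_rhs => rw [← Nat.mod_add_div n N, pow_add, pow_mul, hN.neg_one_pow, one_pow, mul_one]
  rw [Fin.val_add, Fin.val_one', Nat.add_mod_mod, pow_succ, h_mod, pow_succ, mul_neg_one]

section LowerProd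

variable (a b c : ℂ)

noncomputable def lowerProd (w : List Bool) : Matrix (Fin 2) (Fin 2) ℂ :=
  (w.map (Rvertex a b c · true)).prod

@[simp] lemma lowerProd_nil : lowerProd a b c [] = 1 := rfl

@[simp] lemma lowerProd_cons (s : Bool) (w : List Bool) :
    lowerProd a b c (s :: w) = Rvertex a b c s true * lowerProd a b c w := List.prod_cons

lemma lowerProd_apply_zero_one (w : List Bool) : lowerProd a b c w 0 1 = 0 := by
  induction w with
  | nil => simp
  | cons s w ih => cases s <;> simp [Rvertex, mul_apply, Fin.sum_univ_two, ih]

lemma lowerProd_of_false_notMem {w : List Bool} (h : false ∉ w) :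
    lowerProd a b c w = !![a ^ w.length, 0; 0, b ^ w.length] := by
  induction w with
  | nil => simp [one_fin_two]
  | cons s w ih =>
    obtain ⟨rfl, hw⟩ : s = true ∧ false ∉ w := by simpa [eq_comm] using h
    rw [lowerProd_cons, ih hw]
    simp [Rvertex, pow_succ, mul_comm]

lemma lowerProd_diag_eq_zero {w : List Bool} (h : false ∈ w) :
    lowerProd a b c w 0 0 = 0 ∧ lowerProd a b c w 1 1 = 0 := by
  induction w with
  | nil => simp at h
  | cons s w ih =>
    cases s
    · simp [Rvertex, mul_apply, Fin.sum_univ_two, lowerProd_apply_zero_one]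
    · obtain ⟨h0, h1⟩ := ih (by simpa using h)
      simp [Rvertex, mul_apply, Fin.sum_univ_two, h0, h1, lowerProd_apply_zero_one]

end LowerProd

section Sites

variable {N : ℕ} [NeZero N]

lemma add_natCast_inj (l : Fin N) {k k' : ℕ} (hk : k < N) (hk' : k' < N) :
    l + (k : Fin N) = l + k' ↔ k = k' := by
  rw [add_right_inj, CharP.natCast_eq_natCast (Fin N) N, Nat.ModEq, Nat.mod_eq_of_lt hk,
    Nat.mod_eq_of_lt hk']

lemma eq_add_natCast_iff {l i : Fin N} {k : ℕ} (hk : k < N) :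
    i = l + (k : Fin N) ↔ ((i - l : Fin N) : ℕ) = k := by
  rw [← sub_eq_iff_eq_add', Fin.ext_iff, Fin.val_natCast, Nat.mod_eq_of_lt hk]

lemma add_one_add_one (l : Fin N) : l + 1 + 1 = l + 2 := by
  rw [add_assoc, one_add_one_eq_two]

lemma window_ne (hN : 3 ≤ N) (l : Fin N) : l + 1 ≠ l ∧ l + 2 ≠ l ∧ l + 2 ≠ l + 1 := by
  have h := fun k k' (hk : k < 3) (hk' : k' < 3) => add_natCast_inj l (k := k) (k' := k')
    (by omega) (by omega)
  have h0 := h 1 0 (by omega) (by omega)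
  have h1 := h 2 0 (by omega) (by omega)
  have h2 := h 2 1 (by omega) (by omega)
  simp only [Nat.cast_one, Nat.cast_ofNat, Nat.cast_zero, add_zero] at h0 h1 h2
  omega

lemma ne_window_iff (hN : 3 ≤ N) (l i : Fin N) :
    (i ≠ l ∧ i ≠ l + 1 ∧ i ≠ l + 2) ↔ ∃ j < N - 3, i = l + ((3 + j : ℕ) : Fin N) := by
  have h_lt := (i - l).isLt
  have e0 : i = l ↔ ((i - l : Fin N) : ℕ) = 0 := by
    simpa using eq_add_natCast_iff (l := l) (i := i) (k := 0) (by omega)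
  have e1 : i = l + 1 ↔ ((i - l : Fin N) : ℕ) = 1 := by
    simpa using eq_add_natCast_iff (l := l) (i := i) (k := 1) (by omega)
  have e2 : i = l + 2 ↔ ((i - l : Fin N) : ℕ) = 2 := by
    simpa using eq_add_natCast_iff (l := l) (i := i) (k := 2) (by omega)
  simp only [ne_eq, e0, e1, e2]
  constructor
  · intro h
    exact ⟨(i - l : Fin N) - 3, by omega, (eq_add_natCast_iff (by omega)).2 (by omega)⟩
  · rintro ⟨j, hj, hi⟩
    rw [(eq_add_natCast_iff (by omega)).1 hi]
    omega

def pairConfig (l : Fin N) : Fin N → Bool :=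
  fun i => decide (i ∉ ({l, l + 1} : Finset (Fin N)))

lemma ket_pair_eq_single (l : Fin N) : ket {l, l + 1} = Pi.single (pairConfig l) 1 := by
  funext σ
  simp only [ket, Pi.single_apply]
  rfl

@[simp] lemma pairConfig_eq_false_iff {l i : Fin N} :
    pairConfig l i = false ↔ i = l ∨ i = l + 1 := by
  simp [pairConfig, or_iff_not_imp_left]

@[simp] lemma pairConfig_apply_self (l : Fin N) : pairConfig l l = false := by simp

@[simp] lemma pairConfig_apply_add_one (l : Fin N) : pairConfig l (l + 1) = false := by simp

lemma pairConfig_add_one_apply_add_two (l : Fin N) : pairConfig (l + 1) (l + 2) = false := by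
  simp [← add_one_add_one]

lemma pairConfig_apply_add_two (hN : 3 ≤ N) (l : Fin N) : pairConfig l (l + 2) = true := by
  obtain ⟨-, h2, h3⟩ := window_ne hN l
  simpa only [pairConfig, Finset.mem_insert, Finset.mem_singleton, decide_eq_true_eq] using
    not_or.2 ⟨h2, h3⟩

lemma pairConfig_add_one_apply (hN : 3 ≤ N) (l : Fin N) : pairConfig (l + 1) l = true := by
  obtain ⟨h1, h2, -⟩ := window_ne hN l
  simpa only [pairConfig, add_one_add_one, Finset.mem_insert, Finset.mem_singleton,
    decide_eq_true_eq] using not_or.2 ⟨h1.symm, h2.symm⟩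

lemma pairConfig_injective (hN : 3 ≤ N) : Function.Injective (pairConfig (N := N)) := by
  intro x l h
  obtain ⟨h1, h2, h3⟩ := window_ne hN l
  have hx : pairConfig l x = false := by simp [← h]
  have hx1 : pairConfig l (x + 1) = false := by simp [← h]
  simp only [pairConfig_eq_false_iff] at hx hx1
  rcases hx with rfl | rfl
  · rfl
  · rw [add_one_add_one] at hx1
    tauto

noncomputable def rest (σ : Fin N → Bool) (l : Fin N) : List Bool :=
  (List.range (N - 3)).map fun j => σ (l + ((3 + j : ℕ) : Fin N))

@[simp] lemma rest_length (σ : Fin N → Bool) (l : Fin N) : (rest σ l).length = N - 3 := by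
  simp [rest]

lemma mem_rest_iff (hN : 3 ≤ N) {σ : Fin N → Bool} {l : Fin N} {s : Bool} :
    s ∈ rest σ l ↔ ∃ i, (i ≠ l ∧ i ≠ l + 1 ∧ i ≠ l + 2) ∧ σ i = s := by
  simp only [rest, List.mem_map, List.mem_range, ne_window_iff hN]
  constructor
  · rintro ⟨j, hj, rfl⟩
    exact ⟨_, ⟨j, hj, rfl⟩, rfl⟩
  · rintro ⟨_, ⟨j, hj, rfl⟩, rfl⟩
    exact ⟨j, hj, rfl⟩

lemma false_notMem_rest_pairConfig (hN : 3 ≤ N) {x l : Fin N} (hx : x = l ∨ x = l + 1) :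
    false ∉ rest (pairConfig x) l := by
  rw [mem_rest_iff hN]
  rintro ⟨i, ⟨hil, hil1, hil2⟩, hi⟩
  rw [pairConfig_eq_false_iff] at hi
  rcases hx with rfl | rfl
  · tauto
  · rw [add_one_add_one] at hi
    tauto

lemma false_mem_rest_of_ne_pairConfig (hN : 3 ≤ N) {σ : Fin N → Bool} {x l : Fin N}
    (hx : x = l ∨ x = l + 1) (hne : σ ≠ pairConfig x) (h₀ : σ l = pairConfig x l)
    (h₁ : σ (l + 1) = pairConfig x (l + 1)) (h₂ : σ (l + 2) = pairConfig x (l + 2)) :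
    false ∈ rest σ l := by
  by_contra h_rest
  refine hne (funext fun i => ?_)
  by_cases hi : i ≠ l ∧ i ≠ l + 1 ∧ i ≠ l + 2
  · have h_pc := false_notMem_rest_pairConfig hN hx
    rw [mem_rest_iff hN] at h_rest h_pc
    have hσi : σ i ≠ false := fun h => h_rest ⟨i, hi, h⟩
    have hxi : pairConfig x i ≠ false := fun h => h_pc ⟨i, hi, h⟩
    rw [Bool.eq_true_of_not_eq_false hσi, Bool.eq_true_of_not_eq_false hxi]
  · simp only [ne_eq, not_and_or, not_not] at hi
    rcases hi with rfl | rfl | rfl <;> assumption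

end Sites

section Transfer

variable {N : ℕ} [NeZero N] (a b c : ℂ)

lemma transfer_eq_trace_rotate (σ σ' : Fin N → Bool) (l : Fin N) :
    transfer N a b c σ σ' =
      ((List.range N).map fun k : ℕ => Rvertex a b c (σ (l + k)) (σ' (l + k))).prod.trace := by
  set M : Fin N → Matrix (Fin 2) (Fin 2) ℂ := fun i => Rvertex a b c (σ i) (σ' i)
  have h_rot : ((List.range N).map fun k : ℕ => M k).rotate l =
      (List.range N).map fun k : ℕ => M (l + k) := by
    apply List.ext_getElem (by simp)
    intro k h₁ h₂
    simp only [List.getElem_rotate, List.getElem_map, List.getElem_range, List.length_map,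
      List.length_range]
    rw [← CharP.cast_eq_mod, Nat.cast_add, Fin.cast_val_eq_self, add_comm]
  rw [← h_rot, trace_list_prod_rotate, transfer, ← List.map_coe_finRange_eq_range, List.map_map]
  simp [Function.comp_def, M]

lemma transfer_eq_trace_window (hN : 3 ≤ N) (σ σ' : Fin N → Bool) (l : Fin N)
    (hσ' : false ∉ rest σ' l) :
    transfer N a b c σ σ' =
      (Rvertex a b c (σ l) (σ' l) * Rvertex a b c (σ (l + 1)) (σ' (l + 1)) *
        Rvertex a b c (σ (l + 2)) (σ' (l + 2)) * lowerProd a b c (rest σ l)).trace := by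
  have h_range : List.range N = List.range 3 ++ (List.range (N - 3)).map (3 + ·) := by
    rw [← List.range_add, Nat.add_sub_cancel' hN]
  have h_rest : ((List.range (N - 3)).map (3 + ·)).map
      (fun k : ℕ => Rvertex a b c (σ (l + k)) (σ' (l + k))) =
      (rest σ l).map (Rvertex a b c · true) := by
    simp only [rest, List.map_map]
    refine List.map_congr_left fun j hj => ?_
    have h_true : σ' (l + ((3 + j : ℕ) : Fin N)) = true := by
      by_contra h
      exact hσ' (List.mem_map.2 ⟨j, hj, by simpa using h⟩)
    simp only [Function.comp_apply, h_true]
  rw [transfer_eq_trace_rotate a b c σ σ' l, h_range, List.map_append, List.prod_append, h_rest]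
  simp [List.range_succ, lowerProd, mul_assoc]

lemma transfer_pairConfig_eq_zero (hN : 3 ≤ N) {σ : Fin N → Bool} {l : Fin N}
    (hσ : σ l = σ (l + 1)) (hne : σ ≠ pairConfig l) : transfer N a b c σ (pairConfig l) = 0 := by
  have h_pc := false_notMem_rest_pairConfig hN (Or.inl (rfl : l = l))
  have h01 := lowerProd_apply_zero_one a b c (rest σ l)
  rw [transfer_eq_trace_window a b c hN σ _ l h_pc, pairConfig_apply_self, pairConfig_apply_add_one,
    pairConfig_apply_add_two hN, ← hσ, eta_fin_two (lowerProd a b c _)]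
  cases hl : σ l
  · cases hl2 : σ (l + 2)
    · simp [Rvertex, trace_fin_two, h01]
    · obtain ⟨h00, h11⟩ := lowerProd_diag_eq_zero a b c (false_mem_rest_of_ne_pairConfig hN
        (Or.inl rfl) hne (by simp [hl]) (by simp [← hσ, hl])
        (by simp [hl2, pairConfig_apply_add_two hN]))
      simp [Rvertex, trace_fin_two, h00, h11]
  · simp [Rvertex, trace_fin_two, vecMul, dotProduct]

lemma transfer_pairConfig_eq_pairConfig_add_one (hN : 3 ≤ N) {σ : Fin N → Bool} {l : Fin N}
    (hσ : σ (l + 1) = false) (h₀ : σ ≠ pairConfig l) (h₁ : σ ≠ pairConfig (l + 1)) :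
    transfer N a b c σ (pairConfig l) = transfer N a b c σ (pairConfig (l + 1)) := by
  have h01 := lowerProd_apply_zero_one a b c (rest σ l)
  rw [transfer_eq_trace_window a b c hN σ _ l (false_notMem_rest_pairConfig hN (Or.inl rfl)),
    transfer_eq_trace_window a b c hN σ _ l (false_notMem_rest_pairConfig hN (Or.inr rfl)),
    pairConfig_apply_self, pairConfig_apply_add_one, pairConfig_apply_add_two hN,
    pairConfig_add_one_apply hN, pairConfig_apply_self, pairConfig_add_one_apply_add_two, hσ,
    eta_fin_two (lowerProd a b c _)]
  cases hl : σ l <;> cases hl2 : σ (l + 2)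
  · simp [Rvertex, trace_fin_two, h01]
  · obtain ⟨h00, h11⟩ := lowerProd_diag_eq_zero a b c (false_mem_rest_of_ne_pairConfig hN
      (Or.inl rfl) h₀ (by simp [hl]) (by simp [hσ]) (by simp [hl2, pairConfig_apply_add_two hN]))
    simp [Rvertex, trace_fin_two, h00, h11]
  · obtain ⟨h00, h11⟩ := lowerProd_diag_eq_zero a b c (false_mem_rest_of_ne_pairConfig hN
      (Or.inr rfl) h₁ (by simp [hl, pairConfig_add_one_apply hN]) (by simp [hσ])
      (by simp [hl2, pairConfig_add_one_apply_add_two]))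
    simp [Rvertex, trace_fin_two, h00, h11]
  · simp [Rvertex, trace_fin_two, mul_comm c, mul_assoc]

lemma transfer_pairConfig_self (hN : 3 ≤ N) (l : Fin N) :
    transfer N a b c (pairConfig l) (pairConfig l) =
      b ^ 2 * a ^ (N - 2) + a ^ 2 * b ^ (N - 2) := by
  rw [transfer_eq_trace_window a b c hN _ _ l (false_notMem_rest_pairConfig hN (Or.inl rfl)),
    lowerProd_of_false_notMem a b c (false_notMem_rest_pairConfig hN (Or.inl rfl)), rest_length,
    pairConfig_apply_self, pairConfig_apply_add_one, pairConfig_apply_add_two hN,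
    show N - 2 = N - 3 + 1 by omega]
  simp [Rvertex, trace_fin_two, pow_succ]
  ring

lemma transfer_pairConfig_pairConfig_add_one (hN : 3 ≤ N) (l : Fin N) :
    transfer N a b c (pairConfig l) (pairConfig (l + 1)) = c ^ 2 * b ^ (N - 2) := by
  rw [transfer_eq_trace_window a b c hN _ _ l (false_notMem_rest_pairConfig hN (Or.inr rfl)),
    lowerProd_of_false_notMem a b c (false_notMem_rest_pairConfig hN (Or.inl rfl)), rest_length,
    pairConfig_apply_self, pairConfig_apply_add_one, pairConfig_apply_add_two hN,
    pairConfig_add_one_apply hN, pairConfig_apply_self, pairConfig_add_one_apply_add_two,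
    show N - 2 = N - 3 + 1 by omega]
  simp [Rvertex, trace_fin_two, pow_succ]
  ring

lemma transfer_pairConfig_add_one_pairConfig (hN : 3 ≤ N) (l : Fin N) :
    transfer N a b c (pairConfig (l + 1)) (pairConfig l) = c ^ 2 * a ^ (N - 2) := by
  rw [transfer_eq_trace_window a b c hN _ _ l (false_notMem_rest_pairConfig hN (Or.inl rfl)),
    lowerProd_of_false_notMem a b c (false_notMem_rest_pairConfig hN (Or.inr rfl)), rest_length,
    pairConfig_apply_self, pairConfig_apply_add_one, pairConfig_apply_add_two hN,
    pairConfig_add_one_apply hN, pairConfig_apply_self, pairConfig_add_one_apply_add_two,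
    show N - 2 = N - 3 + 1 by omega]
  simp [Rvertex, trace_fin_two, pow_succ]
  ring

lemma sum_transfer_pairConfig_of_ne (hN : 3 ≤ N) (hNeven : Even N) {σ : Fin N → Bool}
    (hσ : ∀ x, σ ≠ pairConfig x) :
    ∑ l : Fin N, (-1 : ℂ) ^ ((l : ℕ) + 1) * transfer N a b c σ (pairConfig l) = 0 := by
  refine sum_eq_zero_of_cancel_pairs 1 σ _ (fun l hl => ?_) (fun l hl => ?_)
  · rw [transfer_pairConfig_eq_zero a b c hN hl (hσ l), mul_zero]
  · rw [transfer_pairConfig_eq_pairConfig_add_one a b c hN hl (hσ l) (hσ (l + 1)),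
      neg_one_pow_val_add_one_add_one hNeven]
    ring

lemma sum_transfer_pairConfig (hN : 3 ≤ N) (hNeven : Even N) (x : Fin N) :
    ∑ l : Fin N, (-1 : ℂ) ^ ((l : ℕ) + 1) * transfer N a b c (pairConfig x) (pairConfig l) =
      (b ^ 2 * a ^ (N - 2) + a ^ 2 * b ^ (N - 2) - c ^ 2 * (a ^ (N - 2) + b ^ (N - 2))) *
        (-1) ^ ((x : ℕ) + 1) := by
  obtain ⟨y, rfl⟩ : ∃ y, x = y + 1 := ⟨x - 1, (sub_add_cancel x 1).symm⟩
  obtain ⟨h1, h2, h3⟩ := window_ne hN y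
  have h_zero : ∀ l ∉ ({y, y + 1, y + 2} : Finset (Fin N)),
      (-1 : ℂ) ^ ((l : ℕ) + 1) * transfer N a b c (pairConfig (y + 1)) (pairConfig l) = 0 := by
    intro l hl
    simp only [Finset.mem_insert, Finset.mem_singleton, not_or] at hl
    obtain ⟨hl0, hl1, hl2⟩ := hl
    rw [← add_one_add_one] at hl2
    have h_eq : pairConfig (y + 1) l = pairConfig (y + 1) (l + 1) := by
      simp [pairConfig, hl0, hl1, hl2]
    rw [transfer_pairConfig_eq_zero a b c hN h_eq
      (fun h => hl1 (pairConfig_injective hN h).symm), mul_zero]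
  rw [← Finset.sum_subset (Finset.subset_univ _) fun l _ hl => h_zero l hl,
    Finset.sum_insert (by simp [h1.symm, h2.symm]), Finset.sum_insert (by simpa using h3.symm),
    Finset.sum_singleton, transfer_pairConfig_add_one_pairConfig a b c hN,
    transfer_pairConfig_self a b c hN, ← add_one_add_one,
    transfer_pairConfig_pairConfig_add_one a b c hN]
  simp only [neg_one_pow_val_add_one_add_one hNeven]
  ring

end Transfer

end SixVertex

open SixVertex

/-- For even `N ≥ 4`, the `n = 2` bound-pair state
`ψ = Σ_{l=1}^{N} (−1)^l |l, l+1⟩` (positions mod `N`; here sites are labelled by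
`Fin N`, site `l ∈ {1,…,N}` corresponding to `l − 1 ∈ Fin N`) is an eigenvector of
the transfer matrix with eigenvalue
`Λ = a²b²(a^(N−4) + b^(N−4)) − c²(a^(N−2) + b^(N−2))`. -/
theorem n2_boundPair_eigenvector (N : ℕ) [NeZero N] (hN : 4 ≤ N) (hNeven : Even N)
    (a b c : ℂ) :
    (transfer N a b c).mulVec
        (fun σ => ∑ l : Fin N, (-1 : ℂ) ^ ((l : ℕ) + 1) * ket {l, l + 1} σ) =
      fun σ =>
        (a^2*b^2*(a^(N-4) + b^(N-4)) - c^2*(a^(N-2) + b^(N-2))) *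
          ∑ l : Fin N, (-1 : ℂ) ^ ((l : ℕ) + 1) * ket {l, l + 1} σ := by
  have hN3 : 3 ≤ N := by omega
  simp_rw [ket_pair_eq_single]
  funext σ
  rw [mulVec_sum_mul_single_apply]
  by_cases hσ : ∃ x, σ = pairConfig x
  · obtain ⟨x, rfl⟩ := hσ
    have ha : a ^ (N - 2) = a ^ 2 * a ^ (N - 4) := by rw [← pow_add]; congr 1; omega
    have hb : b ^ (N - 2) = b ^ 2 * b ^ (N - 4) := by rw [← pow_add]; congr 1; omega
    rw [sum_transfer_pairConfig a b c hN3 hNeven x]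
    simp [Pi.single_apply, (pairConfig_injective hN3).eq_iff, ha, hb]
    ring
  · rw [sum_transfer_pairConfig_of_ne a b c hN3 hNeven (not_exists.1 hσ)]
    simp [not_exists.1 hσ]
end

section
/- Let N = 6 and a, b, c ∈ ℂ. Let T be the zero-field six-vertex transfer matrix on 6 sites and let ψ = |1,2,4⟩ + |2,3,5⟩ + |3,4,6⟩ + |1,4,5⟩ + |2,5,6⟩ + |1,3,6⟩ − |1,2,5⟩ − |2,3,6⟩ − |1,3,4⟩ − |2,4,5⟩ − |3,5,6⟩ − |1,4,6⟩. Then T·ψ = Λ₊·ψ with Λ₊ = 2a³b³ − a b c²(a² + a b + b²) + c⁴(a² − a b + b²). -/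
/-!
The transfer matrix conserves the number of up arrows: grading the horizontal edge by its
state, each vertex matrix shifts the grading by the local change in up arrows, and a matrix of
nonzero degree has zero trace. By cyclicity of the trace it also commutes with the cyclic shift
of the sites. The state `ψ` is shift invariant and lies in the sector with three up arrows, so
`T ψ = Λ₊ ψ` holds outside that sector trivially, and inside it only needs to be checked at one
configuration of each of the four shift orbits, which is a finite computation of traces.
-/

namespace Matrix

variable {n R : Type*}

def IsHomogeneous [Zero R] (g : n → ℤ) (k : ℤ) (M : Matrix n n R) : Prop :=
  ∀ i j, M i j ≠ 0 → g j = g i + k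

theorem isHomogeneous_one [DecidableEq n] [Zero R] [One R] (g : n → ℤ) :
    IsHomogeneous g 0 (1 : Matrix n n R) := by
  intro i j h
  obtain rfl : i = j := by by_contra hij; exact h (one_apply_ne hij)
  simp

theorem IsHomogeneous.mul [Fintype n] [NonUnitalNonAssocSemiring R] {g : n → ℤ} {k l : ℤ}
    {M N : Matrix n n R} (hM : IsHomogeneous g k M) (hN : IsHomogeneous g l N) :
    IsHomogeneous g (k + l) (M * N) := by
  intro i j h
  obtain ⟨m, -, hm⟩ := Finset.exists_ne_zero_of_sum_ne_zero h
  rw [hN m j (right_ne_zero_of_mul hm), hM i m (left_ne_zero_of_mul hm), add_assoc]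

theorem isHomogeneous_list_prod [Fintype n] [DecidableEq n] [NonAssocSemiring R] {ι : Type*}
    {g : n → ℤ} {k : ι → ℤ} {M : ι → Matrix n n R} (hM : ∀ x, IsHomogeneous g (k x) (M x)) :
    ∀ l : List ι, IsHomogeneous g (l.map k).sum (l.map M).prod
  | [] => isHomogeneous_one g
  | x :: l => (hM x).mul (isHomogeneous_list_prod hM l)

theorem IsHomogeneous.trace_eq_zero [Fintype n] [AddCommMonoid R] {g : n → ℤ} {k : ℤ}
    {M : Matrix n n R} (hM : IsHomogeneous g k M) (hk : k ≠ 0) : M.trace = 0 :=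
  Finset.sum_eq_zero fun i _ => by_contra fun h => hk (by linarith [hM i i h])

theorem trace_list_prod_rotate_one [Fintype n] [DecidableEq n] [CommSemiring R] :
    ∀ l : List (Matrix n n R), (l.rotate 1).prod.trace = l.prod.trace
  | [] => rfl
  | M :: l => by
    rw [List.rotate_cons_succ, List.rotate_zero, List.prod_append, List.prod_singleton,
      List.prod_cons, trace_mul_comm]

theorem mulVec_comp_of_submatrix_eq [Fintype n] [NonUnitalNonAssocSemiring R]
    {M : Matrix n n R} {v : n → R} (e : n ≃ n) (hM : M.submatrix e e = M) (hv : v ∘ e = v) :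
    (M *ᵥ v) ∘ e = M *ᵥ v := by
  have hv' : v ∘ e.symm = v := e.comp_symm_eq v v |>.mpr hv.symm
  conv_rhs => rw [← hM, submatrix_mulVec_equiv, hv']

end Matrix

theorem List.ofFn_comp_finRotate {α : Type*} {n : ℕ} (f : Fin (n + 1) → α) :
    List.ofFn (f ∘ finRotate (n + 1)) = (List.ofFn f).rotate 1 := by
  rw [List.ofFn_succ', List.ofFn_succ, List.rotate_cons_succ, List.rotate_zero]
  simp [Fin.coeSucc_eq_succ]

open Matrix

def upCount {N : ℕ} (σ : Fin N → Bool) : ℕ := ∑ i, (σ i).toNat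

def config {N : ℕ} (S : Finset (Fin N)) : Fin N → Bool := fun x => decide (x ∉ S)

def rotateConfig (N : ℕ) : (Fin N → Bool) ≃ (Fin N → Bool) :=
  (finRotate N).symm.arrowCongr (Equiv.refl Bool)

theorem Rvertex_isHomogeneous (a b c : ℂ) (s s' : Bool) :
    IsHomogeneous (fun i : Fin 2 => (i : ℤ)) ((s.toNat : ℤ) - s'.toNat) (Rvertex a b c s s') := by
  intro i j h
  cases s <;> cases s' <;> fin_cases i <;> fin_cases j <;> simp_all [Rvertex]

theorem transfer_eq_zero_of_upCount_ne {N : ℕ} (a b c : ℂ) {σ σ' : Fin N → Bool}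
    (h : upCount σ ≠ upCount σ') : transfer N a b c σ σ' = 0 := by
  refine (isHomogeneous_list_prod (fun i => Rvertex_isHomogeneous a b c (σ i) (σ' i))
    (List.finRange N)).trace_eq_zero ?_
  rw [← List.ofFn_eq_map, List.sum_ofFn, Finset.sum_sub_distrib, sub_ne_zero]
  exact_mod_cast h

theorem transfer_mulVec_apply_eq_zero {N m : ℕ} (a b c : ℂ) {v : (Fin N → Bool) → ℂ}
    (hv : ∀ τ, upCount τ ≠ m → v τ = 0) {σ : Fin N → Bool} (hσ : upCount σ ≠ m) :
    (transfer N a b c *ᵥ v) σ = 0 := by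
  refine Finset.sum_eq_zero fun τ _ => ?_
  change transfer N a b c σ τ * v τ = 0
  by_cases hτ : upCount τ = m
  · rw [transfer_eq_zero_of_upCount_ne a b c (hτ ▸ hσ), zero_mul]
  · rw [hv τ hτ, mul_zero]

theorem transfer_submatrix_rotateConfig (N : ℕ) (a b c : ℂ) :
    (transfer N a b c).submatrix (rotateConfig N) (rotateConfig N) = transfer N a b c := by
  ext σ σ'
  cases N with
  | zero => rfl
  | succ n =>
    simp only [submatrix_apply, transfer, ← List.ofFn_eq_map]
    exact (congrArg (fun l => (List.prod l).trace)
      (List.ofFn_comp_finRotate fun i => Rvertex a b c (σ i) (σ' i))).trans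
      (trace_list_prod_rotate_one _)

theorem upCount_config {N : ℕ} (S : Finset (Fin N)) : upCount (config S) = N - S.card := by
  simp only [upCount, config, Bool.toNat, cond_eq_ite, decide_eq_true_eq]
  rw [Finset.sum_boole, Finset.filter_not, Finset.filter_mem_eq_inter, Finset.univ_inter,
    ← Finset.compl_eq_univ_sdiff, Finset.card_compl, Fintype.card_fin]
  rfl

theorem config_comp_symm {N : ℕ} (S : Finset (Fin N)) (e : Equiv.Perm (Fin N)) :
    config S ∘ e.symm = config (S.map e.toEmbedding) := by
  funext x
  simp [config, Finset.mem_map_equiv]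

theorem ket_eq_single {N : ℕ} (S : Finset (Fin N)) : ket S = Pi.single (config S) 1 := by
  funext σ
  rw [ket, Pi.single_apply]
  rfl

theorem ket_eq_zero_of_upCount_ne {N : ℕ} {S : Finset (Fin N)} {σ : Fin N → Bool}
    (h : upCount σ ≠ N - S.card) : ket S σ = 0 := by
  rw [ket_eq_single, Pi.single_eq_of_ne]
  rintro rfl
  exact h (upCount_config S)

theorem ket_comp_rotateConfig {N : ℕ} (S : Finset (Fin N)) :
    ket S ∘ rotateConfig N = ket (S.map (finRotate N).toEmbedding) := by
  rw [ket_eq_single, ket_eq_single, Pi.single_comp_equiv, ← config_comp_symm]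
  rfl

noncomputable def boundPair : (Fin 6 → Bool) → ℂ :=
  ket {0, 1, 3} + ket {1, 2, 4} + ket {2, 3, 5} + ket {0, 3, 4} + ket {1, 4, 5} + ket {0, 2, 5}
    - ket {0, 1, 4} - ket {1, 2, 5} - ket {0, 2, 3} - ket {1, 3, 4} - ket {2, 4, 5} - ket {0, 3, 5}

def boundPairEigenvalue (a b c : ℂ) : ℂ :=
  2*a^3*b^3 - a*b*c^2*(a^2 + a*b + b^2) + c^4*(a^2 - a*b + b^2)

theorem boundPair_comp_rotateConfig : boundPair ∘ rotateConfig 6 = boundPair := by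
  simp only [boundPair, Pi.add_comp, Pi.sub_comp, ket_comp_rotateConfig, Finset.map_insert,
    Finset.map_singleton, Equiv.coe_toEmbedding, finRotate_apply, Fin.isValue, Fin.reduceAdd]
  simp only [Finset.insert_comm _ (0 : Fin 6), Finset.pair_comm _ (0 : Fin 6)]
  abel

theorem boundPair_eq_zero_of_upCount_ne {σ : Fin 6 → Bool} (h : upCount σ ≠ 3) :
    boundPair σ = 0 := by
  have hket : ∀ S : Finset (Fin 6), S.card = 3 → ket S σ = 0 := fun S hS =>
    ket_eq_zero_of_upCount_ne (by rwa [hS])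
  simp (disch := decide) only [boundPair, Pi.add_apply, Pi.sub_apply, hket]
  norm_num

def rotationRepresentatives : Finset (Finset (Fin 6)) := {{0, 1, 2}, {0, 1, 3}, {0, 1, 4}, {0, 2, 4}}

theorem exists_iterate_rotateConfig_eq_config {σ : Fin 6 → Bool} (h : upCount σ = 3) :
    ∃ k < 6, ∃ R ∈ rotationRepresentatives, σ = (rotateConfig 6)^[k] (config R) := by
  revert σ
  decide

theorem transfer_mulVec_boundPair_config (a b c : ℂ) {R : Finset (Fin 6)}
    (hR : R ∈ rotationRepresentatives) :
    (transfer 6 a b c *ᵥ boundPair) (config R) =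
      boundPairEigenvalue a b c * boundPair (config R) := by
  simp only [boundPair, mulVec_add, mulVec_sub, ket_eq_single, mulVec_single_one, Pi.add_apply,
    Pi.sub_apply, col_apply]
  simp only [rotationRepresentatives, Finset.mem_insert, Finset.mem_singleton] at hR
  rcases hR with rfl | rfl | rfl | rfl <;>
  simp (config := { decide := true }) [transfer, config, List.finRange_succ, Rvertex,
    trace_fin_two, boundPairEigenvalue] <;>
  ring

/-- For `N = 6`, the `n = 3` bound-pair state
`ψ = |1,2,4⟩+|2,3,5⟩+|3,4,6⟩+|1,4,5⟩+|2,5,6⟩+|1,3,6⟩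
  −|1,2,5⟩−|2,3,6⟩−|1,3,4⟩−|2,4,5⟩−|3,5,6⟩−|1,4,6⟩`
(sites labelled by `Fin 6`, site `l ∈ {1,…,6}` corresponding to `l − 1 ∈ Fin 6`) is
an eigenvector of the transfer matrix with eigenvalue
`Λ₊ = 2a³b³ − abc²(a² + ab + b²) + c⁴(a² − ab + b²)`. -/
theorem n3_boundPair_N6_eigenvector (a b c : ℂ) :
    (transfer 6 a b c).mulVec
        (fun σ => ket {0, 1, 3} σ + ket {1, 2, 4} σ + ket {2, 3, 5} σ
          + ket {0, 3, 4} σ + ket {1, 4, 5} σ + ket {0, 2, 5} σ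
          - ket {0, 1, 4} σ - ket {1, 2, 5} σ - ket {0, 2, 3} σ
          - ket {1, 3, 4} σ - ket {2, 4, 5} σ - ket {0, 3, 5} σ) =
      fun σ =>
        (2*a^3*b^3 - a*b*c^2*(a^2 + a*b + b^2) + c^4*(a^2 - a*b + b^2)) *
          (ket {0, 1, 3} σ + ket {1, 2, 4} σ + ket {2, 3, 5} σ
            + ket {0, 3, 4} σ + ket {1, 4, 5} σ + ket {0, 2, 5} σ
            - ket {0, 1, 4} σ - ket {1, 2, 5} σ - ket {0, 2, 3} σ
            - ket {1, 3, 4} σ - ket {2, 4, 5} σ - ket {0, 3, 5} σ) := by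
  change transfer 6 a b c *ᵥ boundPair = fun σ => boundPairEigenvalue a b c * boundPair σ
  have hTψ : (transfer 6 a b c *ᵥ boundPair) ∘ rotateConfig 6 = transfer 6 a b c *ᵥ boundPair :=
    mulVec_comp_of_submatrix_eq _ (transfer_submatrix_rotateConfig 6 a b c)
      boundPair_comp_rotateConfig
  funext σ
  by_cases hσ : upCount σ = 3
  · obtain ⟨k, -, R, hR, rfl⟩ := exists_iterate_rotateConfig_eq_config hσ
    rw [← Function.comp_apply (f := _ *ᵥ _), Function.iterate_invariant hTψ,
      ← Function.comp_apply (f := boundPair), Function.iterate_invariant boundPair_comp_rotateConfig]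
    exact transfer_mulVec_boundPair_config a b c hR
  · rw [transfer_mulVec_apply_eq_zero a b c (fun _ => boundPair_eq_zero_of_upCount_ne) hσ,
      boundPair_eq_zero_of_upCount_ne hσ, mul_zero]
end

section
/- Let N ≥ 4 be an even integer and s, t ∈ ℂ nonzero. Define a = (s² − t²)/(s t), b = (1 − s²t²)/(s t), c = (1 − t⁴)/t². Then (s t)^{−N} t^{−2} · [ (s² − t²)^{N−1}(s²t⁶ − 1) + (s²t² − 1)^{N−1}(s² − t⁶) ] = a²b²(a^{N−4} + b^{N−4}) − c²(a^{N−2} + b^{N−2}). -/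
/-- The `n = 2` bound-pair computation in the six-vertex model: with the
parametrization `z = s²`, `y = t²`, `a = (s² − t²)/(st)`, `b = (1 − s²t²)/(st)`,
`c = (1 − t⁴)/t²`, the quotient of the right-hand side of the T–Q functional
relation by `Q(z) = (zy−1)(z−y)/z` equals the `n = 2` bound-pair eigenvalue
`a²b²(a^(N−4) + b^(N−4)) − c²(a^(N−2) + b^(N−2))`. -/
theorem n2_eigenvalue_identity (N : ℕ) (hN : 4 ≤ N) (hNeven : Even N)
    (s t : ℂ) (hs : s ≠ 0) (ht : t ≠ 0) (a b c : ℂ)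
    (ha : a = (s^2 - t^2)/(s*t)) (hb : b = (1 - s^2*t^2)/(s*t))
    (hc : c = (1 - t^4)/t^2) :
    ((s*t)^N)⁻¹ * (t^2)⁻¹ *
        ((s^2 - t^2)^(N-1) * (s^2*t^6 - 1) + (s^2*t^2 - 1)^(N-1) * (s^2 - t^6)) =
      a^2*b^2*(a^(N-4) + b^(N-4)) - c^2*(a^(N-2) + b^(N-2)) := by
  obtain ⟨m, hm⟩ := hNeven
  obtain ⟨k, hk⟩ : ∃ k, N = 2*k+4 := ⟨(N-4)/2, by omega⟩
  subst hk
  have h1 : 2*k+4-1 = 2*k+3 := by omega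
  have h2 : 2*k+4-2 = 2*k+2 := by omega
  have h3 : 2*k+4-4 = 2*k := by omega
  rw [h1, h2, h3, ha, hb, hc]
  rw [show (s^2*t^2-1)^(2*k+3) = -(1-s^2*t^2)^(2*k+3) by
    rw [show s^2*t^2-1 = -(1-s^2*t^2) by ring, Odd.neg_pow ⟨k+1, by ring⟩]]
  set u := s*t with hu'
  have hu : u ≠ 0 := mul_ne_zero hs ht
  clear_value u
  clear ha hb hc hN hm
  simp only [div_pow]
  rw [pow_add (s^2-t^2) (2*k) 3, pow_add (1-s^2*t^2) (2*k) 3,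
    pow_add (s^2-t^2) (2*k) 2, pow_add (1-s^2*t^2) (2*k) 2,
    pow_add u (2*k) 4, pow_add u (2*k) 2]
  have hU : u^(2*k) ≠ 0 := pow_ne_zero _ hu
  generalize (s^2-t^2)^(2*k) = P at *
  generalize (1-s^2*t^2)^(2*k) = Q at *
  generalize hUU : u^(2*k) = U at *
  field_simp [hu, ht, hU]
  rw [hu']
  ring
end

section
/- Let N ≥ 8 be an even integer and s, t ∈ ℂ nonzero with s⁴ ≠ 1. Write y = t² and z = s², and define a = (s² − t²)/(s t), b = (1 − s²t²)/(s t), c = (1 − t⁴)/t². Define F(z) = (z − y)^{N−1}(zy³ − 1)(z²y⁴ − 1) + (zy − 1)^{N−1}(z − y³)(z² − y⁴). Then: (i) as a polynomial in z (for each fixed nonzero y), F(z) is divisible by z² − 1; and (ii) (s t)^{−N} · F(s²) / (t⁶(s⁴ − 1)) = a⁴b⁴(a^{N−8} + b^{N−8}) − a²b²c²(a^{N−6} + b^{N−6}) + 2a⁴b⁴c²·S_{N−8} − 3a²b²c⁴·S_{N−6} + c⁶·S_{N−4}, where S_m = Σ_{j=0}^{(m−2)/2} a^{2j} b^{m−2−2j}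 for even m ≥ 2 and S₀ = 0 (so that (a² − b²)·S_m = a^m − b^m). -/
/-!
At `z = s²`, `y = t²` one has `z − y = st·a` and `zy − 1 = −st·b`, so for odd `N − 1` the value
`F(s²)` is `(st)^(N−1)` times a combination of `a^(N−1)` and `b^(N−1)`. Writing `N = 2k + 8`,
both sides of (ii) become linear in `a^(2k)`, `b^(2k)` and `S_(2k)` (using
`S_(m+2) = b²·S_m + a^m`), and the one relation `a^(2k) = b^(2k) + (a² − b²)·S_(2k)` between these
reduces (ii) to a rational identity in `s` and `t`; no case split at `a² = b²` is needed.
Part (i) holds because `F(1) = 0` (`N − 1` odd) and `F(−1) = 0`.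
-/

open Polynomial

noncomputable def F4 (N : ℕ) (y : ℂ) : Polynomial ℂ :=
  (X - C y)^(N-1) * (X * C y^3 - 1) * (X^2 * C y^4 - 1)
    + (X * C y - 1)^(N-1) * (X - C y^3) * (X^2 - C y^4)

noncomputable def Seven (a b : ℂ) (m : ℕ) : ℂ :=
  ∑ j ∈ Finset.range (m/2), a^(2*j) * b^(m-2-2*j)

theorem Seven_two_mul_succ (a b : ℂ) (k : ℕ) :
    Seven a b (2 * (k + 1)) = b^2 * Seven a b (2 * k) + a^(2 * k) := by
  simp only [Seven, show 2 * (k + 1) / 2 = k + 1 by omega, show 2 * k / 2 = k by omega,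
    Finset.sum_range_succ, show 2 * (k + 1) - 2 - 2 * k = 0 by omega, pow_zero, mul_one,
    Finset.mul_sum]
  congr 1
  refine Finset.sum_congr rfl fun j hj => ?_
  rw [show 2 * (k + 1) - 2 - 2 * j = (2 * k - 2 - 2 * j) + 2 by
    have := Finset.mem_range.mp hj; omega, pow_add]
  ring

theorem sq_sub_sq_mul_Seven (a b : ℂ) (k : ℕ) :
    (a^2 - b^2) * Seven a b (2 * k) = a^(2 * k) - b^(2 * k) := by
  induction k with
  | zero => simp [Seven]
  | succ k ih =>
    rw [Seven_two_mul_succ]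
    linear_combination b^2 * ih

theorem F4_isRoot_one {N : ℕ} (hN : Odd (N - 1)) (y : ℂ) : (F4 N y).IsRoot 1 := by
  simp only [IsRoot, F4, eval_add, eval_mul, eval_sub, eval_pow, eval_one, eval_X, eval_C,
    one_mul, one_pow]
  rw [← neg_sub y 1, hN.neg_pow]
  ring

theorem F4_isRoot_neg_one (N : ℕ) (y : ℂ) : (F4 N y).IsRoot (-1) := by
  simp only [IsRoot, F4, eval_add, eval_mul, eval_sub, eval_pow, eval_one, eval_X, eval_C]
  rw [show -1 - y = -1 * y - 1 by ring]
  ring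

theorem X_sq_sub_one_dvd_F4 {N : ℕ} (hN : Odd (N - 1)) (y : ℂ) :
    (X^2 - 1 : ℂ[X]) ∣ F4 N y := by
  have h := (isCoprime_X_sub_C_of_isUnit_sub (R := ℂ) (a := 1) (b := -1) (by norm_num)).mul_dvd
    (dvd_iff_isRoot.mpr (F4_isRoot_one hN y)) (dvd_iff_isRoot.mpr (F4_isRoot_neg_one N y))
  simpa only [map_one, map_neg, sub_neg_eq_add, show (X - 1) * (X + 1) = (X^2 - 1 : ℂ[X]) by ring]
    using h

theorem F4_eval_sq {N : ℕ} (hN : Odd (N - 1)) {s t a b : ℂ} (ha : s^2 - t^2 = s * t * a)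
    (hb : 1 - s^2 * t^2 = s * t * b) :
    (F4 N (t^2)).eval (s^2) = (s * t)^(N - 1) * (a^(N - 1) * ((s^2 * t^6 - 1) * (s^4 * t^8 - 1))
      - b^(N - 1) * ((s^2 - t^6) * (s^4 - t^8))) := by
  simp only [F4, eval_add, eval_mul, eval_sub, eval_pow, eval_one, eval_X, eval_C]
  rw [ha, ← neg_sub (1 : ℂ) (s^2 * t^2), hb, hN.neg_pow, mul_pow, mul_pow]
  ring

/-- `A`, `B`, `S` stand for `a^(N−8)`, `b^(N−8)`, `S_(N−8)`. -/
theorem boundPair_identity {s t a b c A B S : ℂ} (hs : s ≠ 0) (ht : t ≠ 0) (hs4 : s^4 ≠ 1)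
    (ha : a = (s^2 - t^2) / (s * t)) (hb : b = (1 - s^2 * t^2) / (s * t))
    (hc : c = (1 - t^4) / t^2) (hA : A = B + (a^2 - b^2) * S) :
    (a^7 * A * ((s^2 * t^6 - 1) * (s^4 * t^8 - 1)) - b^7 * B * ((s^2 - t^6) * (s^4 - t^8)))
        / (s * t * (t^6 * (s^4 - 1)))
      = a^4 * b^4 * (A + B) - a^2 * b^2 * c^2 * (A * a^2 + B * b^2)
          + 2 * a^4 * b^4 * c^2 * S - 3 * a^2 * b^2 * c^4 * (A + b^2 * S)
          + c^6 * (A * (a^2 + b^2) + b^4 * S) := by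
  have hs4' : s^4 - 1 ≠ 0 := sub_ne_zero.mpr hs4
  subst ha hb hc hA
  field_simp
  ring

/-- For even `N ≥ 8` and `s, t ≠ 0` with `s⁴ ≠ 1`, writing `y = t²`,
`a = (s²−t²)/(st)`, `b = (1−s²t²)/(st)`, `c = (1−t⁴)/t²`:
(i) `F(z)` is divisible by `z² − 1`, and
(ii) `(st)^(−N)·F(s²)/(t⁶(s⁴−1))` equals the `n = 4` bound-pair eigenvalue
`a⁴b⁴(a^(N−8)+b^(N−8)) − a²b²c²(a^(N−6)+b^(N−6)) + 2a⁴b⁴c²·S_(N−8)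
− 3a²b²c⁴·S_(N−6) + c⁶·S_(N−4)`. -/
theorem n4_boundPair_eigenvalue_identity (N : ℕ) (hN : 8 ≤ N) (hNeven : Even N)
    (s t : ℂ) (hs : s ≠ 0) (ht : t ≠ 0) (hs4 : s^4 ≠ 1) (a b c : ℂ)
    (ha : a = (s^2 - t^2)/(s*t)) (hb : b = (1 - s^2*t^2)/(s*t))
    (hc : c = (1 - t^4)/t^2) :
    ((X^2 - 1 : Polynomial ℂ) ∣ F4 N (t^2)) ∧
      ((s*t)^N)⁻¹ * (F4 N (t^2)).eval (s^2) / (t^6 * (s^4 - 1)) =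
        a^4*b^4*(a^(N-8) + b^(N-8)) - a^2*b^2*c^2*(a^(N-6) + b^(N-6))
          + 2*a^4*b^4*c^2 * Seven a b (N-8) - 3*a^2*b^2*c^4 * Seven a b (N-6)
          + c^6 * Seven a b (N-4) := by
  obtain ⟨k, rfl⟩ : ∃ k, N = 2 * k + 8 := ⟨N / 2 - 4, by rcases hNeven with ⟨m, rfl⟩; omega⟩
  have hodd : Odd (2 * k + 8 - 1) := ⟨k + 3, by omega⟩
  refine ⟨X_sq_sub_one_dvd_F4 hodd _, ?_⟩
  have hst : s * t ≠ 0 := mul_ne_zero hs ht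
  have hsa : s^2 - t^2 = s * t * a := by rw [ha]; field_simp
  have hsb : 1 - s^2 * t^2 = s * t * b := by rw [hb]; field_simp
  rw [F4_eval_sq hodd hsa hsb, show 2 * k + 8 - 1 = 2 * k + 7 by omega,
    show 2 * k + 8 - 8 = 2 * k by omega, show 2 * k + 8 - 6 = 2 * (k + 1) by omega,
    show 2 * k + 8 - 4 = 2 * (k + 1 + 1) by omega, Seven_two_mul_succ a b (k + 1),
    Seven_two_mul_succ a b k]
  calc _ = (a^7 * a^(2 * k) * ((s^2 * t^6 - 1) * (s^4 * t^8 - 1))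
          - b^7 * b^(2 * k) * ((s^2 - t^6) * (s^4 - t^8))) / (s * t * (t^6 * (s^4 - 1))) := by
        field_simp
        ring
    _ = _ := by
        rw [boundPair_identity hs ht hs4 ha hb hc (by rw [sq_sub_sq_mul_Seven]; ring)]
        ring
end
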